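/- Let v₈ > 0 and let a, b be non-negative integers not both zero. Suppose K₁, K₂ are links with equal crossing numbers c(K₁) = c(K₂) = c > 0, with determinant density d₁ := 2π·log(det K₁)/c < ((a+b)/a)·(ε/2) (when a > 0) and |2π·log(det K₂)/c − v₈| < ((a+b)/b)·(ε/2) (when b > 0). If K satisfies det(K) = (det K₁)^a·(det K₂)^b and c(K) = a·c + b·c, then |2π·log(det K)/c(K) − (b/(a+b))·v₈| < ε. -/

import Mathlib

/-!
Since `log` turns `D₁ ^ a * D₂ ^ b` into `a log D₁ + b log D₂` and the crossing number is
`(a + b) c`, the density of `K` is the weighted mean `(a d₁ + b d₂) / (a + b)` of the two densities.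
Subtracting `b / (a + b) · v₈` leaves `(a d₁ + b (d₂ - v₈)) / (a + b)`, and each of the two
weighted terms is below `(a + b) ε / 2` by hypothesis (trivially so when its weight vanishes).
-/

open Real

theorem log_pow_mul_pow {x y : ℝ} (hx : x ≠ 0) (hy : y ≠ 0) (m n : ℕ) :
    log (x ^ m * y ^ n) = m * log x + n * log y := by
  rw [log_mul (pow_ne_zero m hx) (pow_ne_zero n hy), log_pow, log_pow]

theorem mul_div_add_mul_div_div {a b c k u v : ℝ} (hab : a + b ≠ 0) (hc : c ≠ 0) :
    k * (a * u + b * v) / (a * c + b * c) = (a * (k * u / c) + b * (k * v / c)) / (a + b) := by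
  rw [← add_mul]
  field_simp

theorem mul_lt_of_pos_imp_lt_div_mul {a t s r : ℝ} (ha : 0 ≤ a) (hsr : 0 < s * r)
    (h : 0 < a → t < s / a * r) : a * t < s * r := by
  rcases ha.eq_or_lt with rfl | ha
  · simpa using hsr
  · calc a * t < a * (s / a * r) := mul_lt_mul_of_pos_left (h ha) ha
      _ = s * r := by field_simp

theorem abs_weighted_mean_sub_lt {a b x y v δ : ℝ} (ha : 0 ≤ a) (hb : 0 ≤ b) (hab : 0 < a + b)
    (hx : 0 ≤ x) (hax : a * x < (a + b) * δ) (hby : b * |y - v| < (a + b) * δ) :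
    |(a * x + b * y) / (a + b) - b / (a + b) * v| < 2 * δ := by
  have hsplit : (a * x + b * y) / (a + b) - b / (a + b) * v = (a * x + b * (y - v)) / (a + b) := by
    field_simp
    ring
  rw [hsplit, abs_div, abs_of_pos hab, div_lt_iff₀ hab]
  calc |a * x + b * (y - v)| ≤ |a * x| + |b * (y - v)| := abs_add_le _ _
    _ = a * x + b * |y - v| := by rw [abs_of_nonneg (mul_nonneg ha hx), abs_mul, abs_of_nonneg hb]
    _ < (a + b) * δ + (a + b) * δ := add_lt_add hax hby
    _ = 2 * δ * (a + b) := by ring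

theorem det_density_conway_sum_general (v₈ : ℝ) (a b : ℕ) (hab : 0 < a + b)
    (ε : ℝ) (hε : 0 < ε) (D₁ D₂ D c : ℕ) (hD₁ : 0 < D₁) (hD₂ : 0 < D₂) (hc : 0 < c)
    (h₁ : 0 < a → 2 * Real.pi * Real.log D₁ / c < ((a + b : ℝ) / a) * (ε / 2))
    (h₂ : 0 < b → |2 * Real.pi * Real.log D₂ / c - v₈| < ((a + b : ℝ) / b) * (ε / 2))
    (hD : D = D₁ ^ a * D₂ ^ b) :
    |2 * Real.pi * Real.log D / (a * c + b * c) - ((b : ℝ) / (a + b)) * v₈| < ε := by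
  have habR : (0 : ℝ) < a + b := by exact_mod_cast hab
  have hbound : (0 : ℝ) < (a + b) * (ε / 2) := by positivity
  have hdensity : 2 * π * log D / (a * c + b * c)
      = (a * (2 * π * log D₁ / c) + b * (2 * π * log D₂ / c)) / (a + b) := by
    rw [hD, Nat.cast_mul, Nat.cast_pow, Nat.cast_pow,
      log_pow_mul_pow (by positivity) (by positivity)]
    exact mul_div_add_mul_div_div habR.ne' (by positivity)
  rw [hdensity, ← mul_div_cancel₀ ε two_ne_zero]
  refine abs_weighted_mean_sub_lt (Nat.cast_nonneg a) (Nat.cast_nonneg b) habR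
    (div_nonneg (by positivity) (Nat.cast_nonneg c)) ?_ ?_
  · exact mul_lt_of_pos_imp_lt_div_mul (Nat.cast_nonneg a) hbound
      fun ha ↦ h₁ (by exact_mod_cast ha)
  · exact mul_lt_of_pos_imp_lt_div_mul (Nat.cast_nonneg b) hbound
      fun hb ↦ h₂ (by exact_mod_cast hb)

theorem det_density_conway_sum (v₈ : ℝ) (hv : 0 < v₈) (a b : ℕ) (hab : 0 < a + b)
    (ε : ℝ) (hε : 0 < ε) (D₁ D₂ D c : ℕ) (hD₁ : 0 < D₁) (hD₂ : 0 < D₂) (hc : 0 < c)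
    (h₁ : 0 < a → 2 * Real.pi * Real.log D₁ / c < ((a + b : ℝ) / a) * (ε / 2))
    (h₂ : 0 < b → |2 * Real.pi * Real.log D₂ / c - v₈| < ((a + b : ℝ) / b) * (ε / 2))
    (hD : D = D₁ ^ a * D₂ ^ b) :
    |2 * Real.pi * Real.log D / (a * c + b * c) - ((b : ℝ) / (a + b)) * v₈| < ε :=
  det_density_conway_sum_general v₈ a b hab ε hε D₁ D₂ D c hD₁ hD₂ hc h₁ h₂ hD
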